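/- arXiv:1510.07995 — 2 statements merged into one kernel-verified Lean document; each statement's English description precedes it below -/
import Mathlib

section
/- A symbolic doubly-linked list is uniquely traversable: in an SDLL G = (R, D, val) with regions r₁,…,rₙ (front r₁, back rₙ), for each 1 ≤ i < n the successor of rᵢ is uniquely determined — either next(rᵢ) = r_{i+1} and prev(r_{i+1}) = rᵢ, or (rᵢ, r_{i+1}) ∈ D with next(rᵢ) = prev(r_{i+1}) = ⊤ — and consequently the ordered sequence r₁,…,rₙ is uniquely determined by G together with its front region (assuming each region occurs at most once and D ⊆ R × R links only consecutive regions). -/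
/-- Pointer values: a region, NULL (⊥), or the undefined value ⊤. -/
inductive PVal (R : Type) : Type
  | reg (r : R)
  | null
  | top

/-- A symbolic doubly-linked list is uniquely traversable: the
ordered sequence of regions r₁,…,rₙ of an SDLL is uniquely determined by the
SMG together with its front region (the regions being pairwise distinct and the
DLS set linking only consecutive regions). -/
theorem stmt8 {Region : Type}
    (next prev : Region → PVal Region) (D : Set (Region × Region))
    (n m : ℕ) (hn : 1 ≤ n) (hm : 1 ≤ m)
    (r r' : ℕ → Region)
    (hinj : ∀ i < n, ∀ j < n, r i = r j → i = j)
    (hinj' : ∀ i < m, ∀ j < m, r' i = r' j → i = j)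
    (hrange : r '' Set.Iio n = r' '' Set.Iio m)
    (hD : ∀ p ∈ D, ∃ i, i + 1 < n ∧ p = (r i, r (i+1)))
    (hsdll : ∀ i, i + 1 < n →
      ((next (r i) = PVal.reg (r (i+1)) ∧ prev (r (i+1)) = PVal.reg (r i)) ∨
       ((r i, r (i+1)) ∈ D ∧ next (r i) = PVal.top ∧ prev (r (i+1)) = PVal.top)))
    (hsdll' : ∀ i, i + 1 < m →
      ((next (r' i) = PVal.reg (r' (i+1)) ∧ prev (r' (i+1)) = PVal.reg (r' i)) ∨
       ((r' i, r' (i+1)) ∈ D ∧ next (r' i) = PVal.top ∧ prev (r' (i+1)) = PVal.top)))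
    (hfront : r 0 = r' 0) :
    n = m ∧ ∀ i < n, r i = r' i := by
  -- key: agreement on the common prefix
  have key : ∀ i, i < n → i < m → r i = r' i := by
    intro i
    induction i with
    | zero => intro _ _; exact hfront
    | succ k ih =>
      intro hkn hkm
      have hk : r k = r' k := ih (Nat.lt_of_succ_lt hkn) (Nat.lt_of_succ_lt hkm)
      rcases hsdll k hkn with ⟨h1, _⟩ | ⟨hDmem, h1, _⟩
      · rcases hsdll' k hkm with ⟨h1', _⟩ | ⟨_, h1', _⟩
        · have : PVal.reg (r (k+1)) = PVal.reg (r' (k+1)) := by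
            rw [← h1, hk, h1']
          injection this
        · rw [hk, h1'] at h1; exact absurd h1 (by simp)
      · rcases hsdll' k hkm with ⟨h1', _⟩ | ⟨hDmem', _, _⟩
        · rw [← hk, h1] at h1'; exact absurd h1' (by simp)
        · obtain ⟨j, hj, hpe⟩ := hD _ hDmem'
          have he1 : r' k = r j := congrArg Prod.fst hpe
          have he2 : r' (k+1) = r (j+1) := congrArg Prod.snd hpe
          have : k = j := hinj k (Nat.lt_of_succ_lt hkn) j (Nat.lt_of_succ_lt hj)
            (by rw [hk, he1])
          rw [he2, ← this]
  have hnm : n = m := by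
    rcases lt_trichotomy n m with h | h | h
    · exfalso
      have : r' n ∈ r' '' Set.Iio m := ⟨n, h, rfl⟩
      rw [← hrange] at this
      obtain ⟨j, hj, hje⟩ := this
      have hj' : j < n := hj
      have : r j = r' j := key j hj' (hj'.trans h)
      have : n = j := hinj' n h j (hj'.trans h) (by rw [← this, hje])
      omega
    · exact h
    · exfalso
      have : r m ∈ r '' Set.Iio n := ⟨m, h, rfl⟩
      rw [hrange] at this
      obtain ⟨j, hj, hje⟩ := this
      have hj' : j < m := hj
      have : r j = r' j := key j (hj'.trans h) hj'
      have : m = j := hinj m h j (hj'.trans h) (by rw [this, hje])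
      omega
  exact ⟨hnm, fun i hi => key i hi (hnm ▸ hi)⟩
end

section
/- A NULL-terminated container shape has uniquely determined front and back regions: if G is a container shape (an SDLL with prev(front) = ⊥ and next(back) = ⊥) whose regions are pairwise distinct and whose DLS set only links consecutive regions, then no region other than the front has prev equal to ⊥ among the 'entry' positions and no region other than the back has next equal to ⊥ among the 'exit' positions; formally, the pair (front, back) is the unique pair (r, r') such that G is an SDLL with front r and back r' satisfying prev(r) = ⊥ and next(r') = ⊥. -/
namespace PVal

variable {R : Type} (next prev : R → PVal R) (D : Set (R × R))

def SDLLLink (a b : R) : Prop :=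
  (next a = .reg b ∧ prev b = .reg a) ∨ ((a, b) ∈ D ∧ next a = .top ∧ prev b = .top)

def IsSDLLChain (n : ℕ) (r : ℕ → R) : Prop :=
  ∀ i, i + 1 < n → SDLLLink next prev D (r i) (r (i + 1))

variable {next prev D}

theorem SDLLLink.next_ne_null {a b : R} (h : SDLLLink next prev D a b) : next a ≠ .null := by
  rcases h with ⟨h, _⟩ | ⟨_, h, _⟩ <;> simp [h]

theorem SDLLLink.prev_ne_null {a b : R} (h : SDLLLink next prev D a b) : prev b ≠ .null := by
  rcases h with ⟨_, h⟩ | ⟨_, _, h⟩ <;> simp [h]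

variable {n : ℕ} {r : ℕ → R}

theorem prev_eq_null_iff (hlink : IsSDLLChain next prev D n r)
    (hfront : prev (r 0) = .null) {i : ℕ} (hi : i < n) : prev (r i) = .null ↔ i = 0 := by
  refine ⟨fun hprev => ?_, fun h => h ▸ hfront⟩
  by_contra hi0
  obtain ⟨j, rfl⟩ := Nat.exists_eq_succ_of_ne_zero hi0
  exact (hlink j hi).prev_ne_null hprev

theorem next_eq_null_iff (hlink : IsSDLLChain next prev D n r)
    (hback : next (r (n - 1)) = .null) {i : ℕ} (hi : i < n) : next (r i) = .null ↔ i = n - 1 := by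
  refine ⟨fun hnext => ?_, fun h => h ▸ hback⟩
  by_contra hin
  exact (hlink i (by omega)).next_ne_null hnext

theorem eq_front_of_prev_eq_null (hlink : IsSDLLChain next prev D n r)
    (hfront : prev (r 0) = .null)
    {x : R} (hx : x ∈ r '' Set.Iio n) (hprev : prev x = .null) : x = r 0 := by
  obtain ⟨i, hi, rfl⟩ := hx
  rw [(prev_eq_null_iff hlink hfront hi).1 hprev]

theorem eq_back_of_next_eq_null (hlink : IsSDLLChain next prev D n r)
    (hback : next (r (n - 1)) = .null)
    {x : R} (hx : x ∈ r '' Set.Iio n) (hnext : next x = .null) : x = r (n - 1) := by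
  obtain ⟨i, hi, rfl⟩ := hx
  rw [(next_eq_null_iff hlink hback hi).1 hnext]

end PVal

theorem stmt19_general {Region : Type}
    (next prev : Region → PVal Region) (D : Set (Region × Region))
    (n : ℕ) (r : ℕ → Region)
    (hsdll : ∀ i, i + 1 < n →
      ((next (r i) = PVal.reg (r (i+1)) ∧ prev (r (i+1)) = PVal.reg (r i)) ∨
       ((r i, r (i+1)) ∈ D ∧ next (r i) = PVal.top ∧ prev (r (i+1)) = PVal.top)))
    (hfront : prev (r 0) = PVal.null)
    (hback : next (r (n-1)) = PVal.null) :
    (∀ i < n, (prev (r i) = PVal.null ↔ i = 0) ∧ (next (r i) = PVal.null ↔ i = n - 1)) ∧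
    (∀ (m : ℕ) (r' : ℕ → Region), 1 ≤ m →
      (∀ i < m, ∀ j < m, r' i = r' j → i = j) →
      r' '' Set.Iio m = r '' Set.Iio n →
      (∀ i, i + 1 < m →
        ((next (r' i) = PVal.reg (r' (i+1)) ∧ prev (r' (i+1)) = PVal.reg (r' i)) ∨
         ((r' i, r' (i+1)) ∈ D ∧ next (r' i) = PVal.top ∧ prev (r' (i+1)) = PVal.top))) →
      prev (r' 0) = PVal.null → next (r' (m-1)) = PVal.null →
      r' 0 = r 0 ∧ r' (m-1) = r (n-1)) := by
  refine ⟨fun i hi =>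
    ⟨PVal.prev_eq_null_iff hsdll hfront hi, PVal.next_eq_null_iff hsdll hback hi⟩, ?_⟩
  intro m r' hm _ himg _ hfront' hback'
  have hmem : ∀ i < m, r' i ∈ r '' Set.Iio n := fun i hi => himg ▸ Set.mem_image_of_mem r' hi
  exact ⟨PVal.eq_front_of_prev_eq_null hsdll hfront (hmem 0 hm) hfront',
    PVal.eq_back_of_next_eq_null hsdll hback (hmem (m - 1) (by omega)) hback'⟩

/-- A NULL-terminated container shape has uniquely determined
front and back regions: no region other than the front has `prev = ⊥`, no
region other than the back has `next = ⊥`, and any enumeration of the same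
region set satisfying the SDLL and NULL-termination conditions has the same
front and back. -/
theorem stmt19 {Region : Type}
    (next prev : Region → PVal Region) (D : Set (Region × Region))
    (n : ℕ) (hn : 1 ≤ n) (r : ℕ → Region)
    (hinj : ∀ i < n, ∀ j < n, r i = r j → i = j)
    (hD : ∀ p, p ∈ D ↔ ∃ i, i + 1 < n ∧ p = (r i, r (i+1)) ∧ next (r i) = PVal.top)
    (hsdll : ∀ i, i + 1 < n →
      ((next (r i) = PVal.reg (r (i+1)) ∧ prev (r (i+1)) = PVal.reg (r i)) ∨
       ((r i, r (i+1)) ∈ D ∧ next (r i) = PVal.top ∧ prev (r (i+1)) = PVal.top)))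
    (hfront : prev (r 0) = PVal.null)
    (hback : next (r (n-1)) = PVal.null) :
    (∀ i < n, (prev (r i) = PVal.null ↔ i = 0) ∧ (next (r i) = PVal.null ↔ i = n - 1)) ∧
    (∀ (m : ℕ) (r' : ℕ → Region), 1 ≤ m →
      (∀ i < m, ∀ j < m, r' i = r' j → i = j) →
      r' '' Set.Iio m = r '' Set.Iio n →
      (∀ i, i + 1 < m →
        ((next (r' i) = PVal.reg (r' (i+1)) ∧ prev (r' (i+1)) = PVal.reg (r' i)) ∨
         ((r' i, r' (i+1)) ∈ D ∧ next (r' i) = PVal.top ∧ prev (r' (i+1)) = PVal.top))) →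
      prev (r' 0) = PVal.null → next (r' (m-1)) = PVal.null →
      r' 0 = r 0 ∧ r' (m-1) = r (n-1)) :=
  stmt19_general next prev D n r hsdll hfront hback
end
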